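/- Let Ω ⊆ ℝ⁶ be open with coordinates (r,s,t,x,y,z), and let u : Ω → ℝ be smooth with u_s ≠ 0 on Ω and satisfying the six-dimensional equation F[u] = 0 on Ω. Let U : Ω → ℝ be smooth with ℓ_F(U) = 0 on Ω, and let Ũ : Ω → ℝ be smooth and satisfy on Ω the two relations Ũ_y − (u_y/u_s) Ũ_s = −(u_y/u_s) U_r + U_t − ((u_{st} − u_{ry})/u_s) U and Ũ_z − (u_z/u_s) Ũ_s = −(u_z/u_s) U_r + U_x + ((u_{rz} − u_{sx})/u_s) U. Then ℓ_F(Ũ) = 0 on Ω, i.e., the relations define a recursion operator mapping symmetries of F[u] = 0 to symmetries. -/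

import Mathlib

/-!
Clearing the denominator `u_s`, the two relations say `G_{y,t} = G_{z,x} = 0` on `Ω`, where
`G_{j,k} = u_s Ũ_j − u_j Ũ_s + u_j U_r − u_s U_k + (u_{sk} − u_{rj}) U`. For arbitrary smooth
`u`, `U`, `Ũ`, the quantity `u_s² ℓ_F(Ũ)` is a combination, with coefficients polynomial in the
jets, of the compatibility expression `∂_t G_{z,x} − ∂_x G_{y,t}`, of `∂_r G_{y,t}`, `∂_r G_{z,x}`,
the `G`'s themselves, `F[u]` and `∂_r F[u]`. All of these vanish on `Ω`, and `u_s ≠ 0`.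
-/

/- Coordinates on ℝ⁶: r = 0, s = 1, t = 2, x = 3, y = 4, z = 5. -/

/-- Partial derivative of `f` in the `i`-th coordinate direction. -/
noncomputable def pd (i : Fin 6) (f : (Fin 6 → ℝ) → ℝ) (p : Fin 6 → ℝ) : ℝ :=
  fderiv ℝ f p (Pi.single i 1)

/-- The six-dimensional equation
`F[u] = u_s u_{zt} − u_z u_{st} − u_s u_{xy} + u_y u_{sx} − u_y u_{rz} + u_z u_{ry}`. -/
noncomputable def Fop (u : (Fin 6 → ℝ) → ℝ) (p : Fin 6 → ℝ) : ℝ :=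
  pd 1 u p * pd 5 (pd 2 u) p - pd 5 u p * pd 1 (pd 2 u) p
    - pd 1 u p * pd 3 (pd 4 u) p + pd 4 u p * pd 1 (pd 3 u) p
    - pd 4 u p * pd 0 (pd 5 u) p + pd 5 u p * pd 0 (pd 4 u) p

/-- The linearization `ℓ_F(W)` of `F` at `u`, applied to `W`. -/
noncomputable def ellF (u W : (Fin 6 → ℝ) → ℝ) (p : Fin 6 → ℝ) : ℝ :=
  pd 1 W p * pd 5 (pd 2 u) p + pd 1 u p * pd 5 (pd 2 W) p
    - pd 5 W p * pd 1 (pd 2 u) p - pd 5 u p * pd 1 (pd 2 W) p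
    - pd 1 W p * pd 3 (pd 4 u) p - pd 1 u p * pd 3 (pd 4 W) p
    + pd 4 W p * pd 1 (pd 3 u) p + pd 4 u p * pd 1 (pd 3 W) p
    - pd 4 W p * pd 0 (pd 5 u) p - pd 4 u p * pd 0 (pd 5 W) p
    + pd 5 W p * pd 0 (pd 4 u) p + pd 5 u p * pd 0 (pd 4 W) p

open Topology

section PartialDerivatives

variable {f g : (Fin 6 → ℝ) → ℝ} {p : Fin 6 → ℝ}

theorem ContDiffAt.pd {m n : WithTop ℕ∞} (hf : ContDiffAt ℝ n f p) (hmn : m + 1 ≤ n)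
    (i : Fin 6) : ContDiffAt ℝ m (pd i f) p :=
  (hf.fderiv_right hmn).clm_apply contDiffAt_const

theorem Filter.EventuallyEq.pd_eq (h : f =ᶠ[𝓝 p] g) (i : Fin 6) : pd i f p = pd i g p := by
  rw [pd, pd, h.fderiv_eq]

theorem pd_eq_zero_of_eventually_eq_zero (h : ∀ᶠ q in 𝓝 p, f q = 0) (i : Fin 6) :
    pd i f p = 0 := by
  rw [Filter.EventuallyEq.pd_eq (g := fun _ => 0) h]
  simp [pd]

theorem pd_comm (hf : ContDiffAt ℝ 2 f p) (i j : Fin 6) : pd i (pd j f) p = pd j (pd i f) p := by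
  have hdd : DifferentiableAt ℝ (fderiv ℝ f) p :=
    (hf.fderiv_right (m := 1) le_rfl).differentiableAt one_ne_zero
  have pd_pd_eq (k l : Fin 6) :
      pd k (pd l f) p = fderiv ℝ (fderiv ℝ f) p (Pi.single k 1) (Pi.single l 1) := by
    unfold pd
    rw [fderiv_clm_apply hdd (differentiableAt_const _)]
    simp
  rw [pd_pd_eq, pd_pd_eq]
  exact hf.isSymmSndFDerivAt (by simp [minSmoothness_of_isRCLikeNormedField]) _ _

theorem pd_pd_comm (hf : ContDiffAt ℝ 3 f p) (i j k : Fin 6) :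
    pd i (pd j (pd k f)) p = pd i (pd k (pd j f)) p := by
  refine Filter.EventuallyEq.pd_eq ?_ i
  filter_upwards [hf.eventually (by decide)] with q hq
  exact pd_comm (hq.of_le (by norm_num)) j k

theorem pd_add (hf : DifferentiableAt ℝ f p) (hg : DifferentiableAt ℝ g p) (i : Fin 6) :
    pd i (fun q => f q + g q) p = pd i f p + pd i g p := by
  simp [pd, fderiv_fun_add hf hg]

theorem pd_sub (hf : DifferentiableAt ℝ f p) (hg : DifferentiableAt ℝ g p) (i : Fin 6) :
    pd i (fun q => f q - g q) p = pd i f p - pd i g p := by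
  simp [pd, fderiv_fun_sub hf hg]

theorem pd_mul (hf : DifferentiableAt ℝ f p) (hg : DifferentiableAt ℝ g p) (i : Fin 6) :
    pd i (fun q => f q * g q) p = pd i f p * g p + f p * pd i g p := by
  simp [pd, fderiv_fun_mul hf hg]
  ring

end PartialDerivatives

/-- `G_{j,k}`: for `(j, k) = (y, t)` and `(z, x)` this is `u_s` times the difference of the two
sides of the corresponding relation of the theorem. -/
noncomputable def recursionRelation (u U Ut : (Fin 6 → ℝ) → ℝ) (j k : Fin 6)
    (q : Fin 6 → ℝ) : ℝ :=
  pd 1 u q * pd j Ut q - pd j u q * pd 1 Ut q + pd j u q * pd 0 U q - pd 1 u q * pd k U q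
    + (pd 1 (pd k u) q - pd 0 (pd j u) q) * U q

theorem recursionRelation_eq_zero {u U Ut : (Fin 6 → ℝ) → ℝ} {j k : Fin 6}
    {q : Fin 6 → ℝ} (hus : pd 1 u q ≠ 0)
    (h : pd j Ut q - (pd j u q / pd 1 u q) * pd 1 Ut q =
      -(pd j u q / pd 1 u q) * pd 0 U q + pd k U q
        - ((pd 1 (pd k u) q - pd 0 (pd j u) q) / pd 1 u q) * U q) :
    recursionRelation u U Ut j k q = 0 := by
  field_simp at h
  rw [recursionRelation]
  linear_combination h

theorem sq_pd_one_mul_ellF {u U Ut : (Fin 6 → ℝ) → ℝ} {p : Fin 6 → ℝ}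
    (hu : ContDiffAt ℝ 3 u p) (hU : ContDiffAt ℝ 2 U p) (hUt : ContDiffAt ℝ 2 Ut p) :
    pd 1 u p ^ 2 * ellF u Ut p =
      pd 1 u p ^ 2 * (pd 2 (recursionRelation u U Ut 5 3) p
          - pd 3 (recursionRelation u U Ut 4 2) p)
      + pd 1 u p * (pd 5 u p * pd 0 (recursionRelation u U Ut 4 2) p
          - pd 4 u p * pd 0 (recursionRelation u U Ut 5 3) p)
      + (2 * pd 1 u p * pd 1 (pd 3 u) p - pd 1 u p * pd 0 (pd 5 u) p - pd 0 (pd 1 u) p * pd 5 u p)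
          * recursionRelation u U Ut 4 2 p
      + (pd 1 u p * pd 0 (pd 4 u) p - 2 * pd 1 u p * pd 1 (pd 2 u) p + pd 0 (pd 1 u) p * pd 4 u p)
          * recursionRelation u U Ut 5 3 p
      + (2 * pd 1 u p * pd 1 Ut p - pd 1 u p * pd 0 U p - pd 0 (pd 1 u) p * U p) * Fop u p
      + pd 1 u p * U p * pd 0 (Fop u) p := by
  have hu₂ : ContDiffAt ℝ 2 u p := hu.of_le (by norm_num)
  have hu₁ (i : Fin 6) : ContDiffAt ℝ 2 (pd i u) p := hu.pd (by norm_num) i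
  have hdu (i : Fin 6) : DifferentiableAt ℝ (pd i u) p := (hu₁ i).differentiableAt two_ne_zero
  have hdu₂ (i j : Fin 6) : DifferentiableAt ℝ (pd i (pd j u)) p :=
    ((hu₁ j).pd (m := 1) (by norm_num) i).differentiableAt one_ne_zero
  have hdU : DifferentiableAt ℝ U p := hU.differentiableAt two_ne_zero
  have hdU₁ (i : Fin 6) : DifferentiableAt ℝ (pd i U) p :=
    (hU.pd (m := 1) (by norm_num) i).differentiableAt one_ne_zero
  have hdUt₁ (i : Fin 6) : DifferentiableAt ℝ (pd i Ut) p :=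
    (hUt.pd (m := 1) (by norm_num) i).differentiableAt one_ne_zero
  unfold recursionRelation Fop ellF
  simp (disch := fun_prop) only [pd_add, pd_sub, pd_mul]
  -- bring every mixed partial to the index order used in `Fop` and `ellF`
  rw [pd_comm hu₂ 2 1, pd_comm hu₂ 2 5, pd_comm hu₂ 3 1,
    pd_comm hUt 2 5, pd_comm hUt 2 1, pd_comm hUt 3 1,
    pd_comm hU 2 0, pd_comm hU 3 0, pd_comm hU 3 2,
    pd_comm (hu₁ 3) 2 1, pd_comm (hu₁ 2) 3 1, pd_pd_comm hu 1 3 2,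
    pd_comm (hu₁ 5) 2 0, pd_pd_comm hu 0 2 5, pd_comm (hu₁ 4) 3 0]
  ring

theorem recursion_operator_six_dim_general
    (Ω : Set (Fin 6 → ℝ)) (hΩ : IsOpen Ω)
    (u U Ut : (Fin 6 → ℝ) → ℝ)
    (hu : ContDiffOn ℝ (⊤ : ℕ∞) u Ω)
    (hU : ContDiffOn ℝ (⊤ : ℕ∞) U Ω)
    (hUt : ContDiffOn ℝ (⊤ : ℕ∞) Ut Ω)
    (hus : ∀ p ∈ Ω, pd 1 u p ≠ 0)
    (hF : ∀ p ∈ Ω, Fop u p = 0)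
    -- Ũ_y − (u_y/u_s) Ũ_s = −(u_y/u_s) U_r + U_t − ((u_{st} − u_{ry})/u_s) U
    (hrel1 : ∀ p ∈ Ω,
      pd 4 Ut p - (pd 4 u p / pd 1 u p) * pd 1 Ut p =
        -(pd 4 u p / pd 1 u p) * pd 0 U p + pd 2 U p
          - ((pd 1 (pd 2 u) p - pd 0 (pd 4 u) p) / pd 1 u p) * U p)
    -- Ũ_z − (u_z/u_s) Ũ_s = −(u_z/u_s) U_r + U_x + ((u_{rz} − u_{sx})/u_s) U
    (hrel2 : ∀ p ∈ Ω,
      pd 5 Ut p - (pd 5 u p / pd 1 u p) * pd 1 Ut p =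
        -(pd 5 u p / pd 1 u p) * pd 0 U p + pd 3 U p
          + ((pd 0 (pd 5 u) p - pd 1 (pd 3 u) p) / pd 1 u p) * U p) :
    ∀ p ∈ Ω, ellF u Ut p = 0 := by
  intro p hp
  have hΩp : Ω ∈ 𝓝 p := hΩ.mem_nhds hp
  have hG₁ : ∀ᶠ q in 𝓝 p, recursionRelation u U Ut 4 2 q = 0 := by
    filter_upwards [hΩp] with q hq using recursionRelation_eq_zero (hus q hq) (hrel1 q hq)
  have hG₂ : ∀ᶠ q in 𝓝 p, recursionRelation u U Ut 5 3 q = 0 := by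
    filter_upwards [hΩp] with q hq
    exact recursionRelation_eq_zero (hus q hq) (by rw [hrel2 q hq]; ring)
  have hF' : ∀ᶠ q in 𝓝 p, Fop u q = 0 := by filter_upwards [hΩp] using hF
  have key := sq_pd_one_mul_ellF (U := U)
    ((hu.contDiffAt hΩp).of_le (WithTop.coe_le_coe.2 le_top))
    ((hU.contDiffAt hΩp).of_le (WithTop.coe_le_coe.2 le_top))
    ((hUt.contDiffAt hΩp).of_le (WithTop.coe_le_coe.2 le_top))
  simpa [pd_eq_zero_of_eventually_eq_zero hG₁, pd_eq_zero_of_eventually_eq_zero hG₂,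
    pd_eq_zero_of_eventually_eq_zero hF', hG₁.self_of_nhds, hG₂.self_of_nhds, hF'.self_of_nhds,
    hus p hp] using key

theorem recursion_operator_six_dim
    (Ω : Set (Fin 6 → ℝ)) (hΩ : IsOpen Ω)
    (u U Ut : (Fin 6 → ℝ) → ℝ)
    (hu : ContDiffOn ℝ (⊤ : ℕ∞) u Ω)
    (hU : ContDiffOn ℝ (⊤ : ℕ∞) U Ω)
    (hUt : ContDiffOn ℝ (⊤ : ℕ∞) Ut Ω)
    (hus : ∀ p ∈ Ω, pd 1 u p ≠ 0)
    (hF : ∀ p ∈ Ω, Fop u p = 0)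
    (hsym : ∀ p ∈ Ω, ellF u U p = 0)
    -- Ũ_y − (u_y/u_s) Ũ_s = −(u_y/u_s) U_r + U_t − ((u_{st} − u_{ry})/u_s) U
    (hrel1 : ∀ p ∈ Ω,
      pd 4 Ut p - (pd 4 u p / pd 1 u p) * pd 1 Ut p =
        -(pd 4 u p / pd 1 u p) * pd 0 U p + pd 2 U p
          - ((pd 1 (pd 2 u) p - pd 0 (pd 4 u) p) / pd 1 u p) * U p)
    -- Ũ_z − (u_z/u_s) Ũ_s = −(u_z/u_s) U_r + U_x + ((u_{rz} − u_{sx})/u_s) U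
    (hrel2 : ∀ p ∈ Ω,
      pd 5 Ut p - (pd 5 u p / pd 1 u p) * pd 1 Ut p =
        -(pd 5 u p / pd 1 u p) * pd 0 U p + pd 3 U p
          + ((pd 0 (pd 5 u) p - pd 1 (pd 3 u) p) / pd 1 u p) * U p) :
    ∀ p ∈ Ω, ellF u Ut p = 0 :=
  recursion_operator_six_dim_general Ω hΩ u U Ut hu hU hUt hus hF hrel1 hrel2
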